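/- arXiv:2005.07859 — 2 statements merged into one kernel-verified Lean document; each statement's English description precedes it below -/
import Mathlib

section
/- Let r ≥ 0 be a real number and let X be a Poisson random variable with rate r, i.e., P(X = j) = e^{-r} r^j / j! for every j ∈ ℕ. Then P(X ≤ r/2) = ∑_{j ∈ ℕ, j ≤ r/2} e^{-r} r^j / j! ≤ exp(r·(1/e + 1/2 − 1)). -/
lemma exp_tsum' (x : ℝ) : ∑' n : ℕ, x ^ n / n.factorial = Real.exp x := by
  rw [Real.exp_eq_exp_ℝ, NormedSpace.exp_eq_tsum_div]

/-- For a Poisson random variable `X` with rate `r ≥ 0`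
(`P(X = j) = e^{-r} r^j / j!`), we have
`P(X ≤ r/2) = ∑_{j ∈ ℕ, j ≤ r/2} e^{-r} r^j / j! ≤ exp(r·(1/e + 1/2 − 1))`. -/
theorem stmt0 (r : ℝ) (hr : 0 ≤ r) :
    ∑' j : {j : ℕ // (j : ℝ) ≤ r / 2},
        Real.exp (-r) * r ^ (j : ℕ) / (Nat.factorial (j : ℕ))
      ≤ Real.exp (r * (1 / Real.exp 1 + 1 / 2 - 1)) := by
  set f : ℕ → ℝ := fun j => Real.exp (-r) * r ^ j / j.factorial with hf
  set g : ℕ → ℝ := fun j => Real.exp (-r) * Real.exp (r / 2) * ((r / Real.exp 1) ^ j / j.factorial) with hg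
  have hsumf : Summable f := by
    have := (Real.summable_pow_div_factorial r).mul_left (Real.exp (-r))
    simpa [hf, mul_div_assoc] using this
  have hsumg : Summable g :=
    (Real.summable_pow_div_factorial (r / Real.exp 1)).mul_left _
  have hle : ∀ j : ℕ, (j : ℝ) ≤ r / 2 → f j ≤ g j := by
    intro j hj
    have hexpj : Real.exp (-r) * r ^ j / j.factorial ≤
        Real.exp (-r) * r ^ j / j.factorial * Real.exp (r / 2 - j) := by
      nlinarith [Real.one_le_exp (by linarith : (0:ℝ) ≤ r / 2 - j),
        div_nonneg (mul_nonneg (Real.exp_pos (-r)).le (pow_nonneg hr j))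
          (Nat.cast_nonneg j.factorial : (0:ℝ) ≤ j.factorial)]
    refine hexpj.trans_eq ?_
    have h1 : Real.exp (r / 2 - j) = Real.exp (r / 2) / Real.exp 1 ^ j := by
      rw [Real.exp_sub]
      congr 1
      rw [← Real.exp_nat_mul, mul_one]
    rw [hg]
    simp only [h1, div_pow]
    field_simp
  have key : (∑' j : {j : ℕ // (j : ℝ) ≤ r / 2}, f j) ≤ ∑' j : ℕ, g j := by
    have hts : (∑' j : {j : ℕ // (j : ℝ) ≤ r / 2}, f j)
        = ∑' j : ℕ, Set.indicator {j : ℕ | (j : ℝ) ≤ r / 2} f j :=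
      tsum_subtype {j : ℕ | (j : ℝ) ≤ r / 2} f
    rw [hts]
    refine Summable.tsum_le_tsum ?_ (hsumf.indicator _) hsumg
    intro j
    by_cases h : (j : ℝ) ≤ r / 2
    · rw [Set.indicator_of_mem (show j ∈ {j : ℕ | (j : ℝ) ≤ r / 2} from h)]; exact hle j h
    · rw [Set.indicator_of_notMem (show j ∉ {j : ℕ | (j : ℝ) ≤ r / 2} from h)]
      exact mul_nonneg (mul_nonneg (Real.exp_pos _).le (Real.exp_pos _).le)
        (div_nonneg (pow_nonneg (div_nonneg hr (Real.exp_pos 1).le) j)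
          (Nat.cast_nonneg _))
  refine key.trans_eq ?_
  rw [hg]
  rw [tsum_mul_left, exp_tsum', ← Real.exp_add, ← Real.exp_add]
  congr 1
  field_simp
  ring
end

section
/- Let G be a finite simple connected graph on vertex set V with |V| = n ≥ 2, and let I be a nonempty proper subset of V with complement U. Then ∑_{{u,v} ∈ E(I,U)} (1/d_u + 1/d_v) ≥ Φ(G) · ρ(G) · min(|I|, |U|). -/
open Finset

variable {V : Type*} [Fintype V] [DecidableEq V]

/-- The directed representatives of the cut `E(S, S̄)`: ordered pairs `(u, v)` with
`u ∈ S`, `v ∉ S` and `{u,v}` an edge of `G`.  Each edge of the cut corresponds to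
exactly one such pair. -/
def cutPairs (G : SimpleGraph V) [DecidableRel G.Adj] (S : Finset V) : Finset (V × V) :=
  Finset.univ.filter fun p => p.1 ∈ S ∧ p.2 ∉ S ∧ G.Adj p.1 p.2

/-- The volume of a set of vertices: the sum of the degrees of its elements. -/
def vol (G : SimpleGraph V) [DecidableRel G.Adj] (S : Finset V) : ℕ :=
  ∑ u ∈ S, G.degree u

/-- The conductance `Φ(G) = min_{∅ ≠ S ⊊ V} |E(S,S̄)| / min(vol S, vol S̄)`. -/
noncomputable def conductance (G : SimpleGraph V) [DecidableRel G.Adj] : ℝ :=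
  ⨅ S : {S : Finset V // S.Nonempty ∧ S ≠ Finset.univ},
    ((cutPairs G S.1).card : ℝ) / min (vol G S.1 : ℝ) (vol G (S.1)ᶜ : ℝ)

/-- The average degree `d̄(S) = vol(S)/|S|`. -/
noncomputable def avgDeg (G : SimpleGraph V) [DecidableRel G.Adj] (S : Finset V) : ℝ :=
  (vol G S : ℝ) / (S.card : ℝ)

/-- The diligence of the cut `E(S,S̄)`:
`ρ(S) = min_{{u,v} ∈ E(S,S̄)} max(d̄(S)/d_u, d̄(S)/d_v)`. -/
noncomputable def cutDiligence (G : SimpleGraph V) [DecidableRel G.Adj] (S : Finset V) : ℝ :=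
  ⨅ p : cutPairs G S,
    max (avgDeg G S / (G.degree (p : V × V).1 : ℝ)) (avgDeg G S / (G.degree (p : V × V).2 : ℝ))

/-- The diligence of `G`: `ρ(G) = min_{S, 0 < vol S ≤ vol G / 2} ρ(S)`. -/
noncomputable def diligence (G : SimpleGraph V) [DecidableRel G.Adj] : ℝ :=
  ⨅ S : {S : Finset V // 0 < vol G S ∧ 2 * vol G S ≤ vol G Finset.univ},
    cutDiligence G S.1

/-- The absolute diligence of `G`: `ρ̄(G) = min_{{u,v} ∈ E} max(1/d_u, 1/d_v)`. -/
noncomputable def absDiligence (G : SimpleGraph V) [DecidableRel G.Adj] : ℝ :=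
  ⨅ p : {p : V × V // G.Adj p.1 p.2},
    max (1 / (G.degree (p : V × V).1 : ℝ)) (1 / (G.degree (p : V × V).2 : ℝ))

set_option linter.unusedSectionVars false
set_option linter.unusedVariables false

lemma mydeg_pos (G : SimpleGraph V) [DecidableRel G.Adj] (hn : 2 ≤ Fintype.card V)
    (hconn : G.Connected) (u : V) : 0 < G.degree u := by
  rw [G.degree_pos_iff_exists_adj u]
  obtain ⟨w, hw⟩ := Fintype.exists_ne_of_one_lt_card (by omega) u
  obtain ⟨p⟩ := hconn u w
  cases p with
  | nil => exact absurd rfl hw.symm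
  | cons h _ => exact ⟨_, h⟩

lemma vol_split (G : SimpleGraph V) [DecidableRel G.Adj] (S : Finset V) :
    vol G Finset.univ = vol G S + vol G Sᶜ := by
  unfold vol
  rw [Finset.sum_add_sum_compl]

lemma cutDiligence_nonneg (G : SimpleGraph V) [DecidableRel G.Adj] (S : Finset V)
    (hS : S.Nonempty) : 0 ≤ cutDiligence G S := by
  apply Real.iInf_nonneg
  intro p
  have h1 : (0:ℝ) ≤ avgDeg G S := div_nonneg (Nat.cast_nonneg _) (Nat.cast_nonneg _)
  exact le_max_of_le_left (div_nonneg h1 (Nat.cast_nonneg _))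

lemma conductance_nonneg (G : SimpleGraph V) [DecidableRel G.Adj] : 0 ≤ conductance G := by
  apply Real.iInf_nonneg
  intro S
  exact div_nonneg (Nat.cast_nonneg _) (le_min (Nat.cast_nonneg _) (Nat.cast_nonneg _))

lemma diligence_nonneg (G : SimpleGraph V) [DecidableRel G.Adj] : 0 ≤ diligence G := by
  apply Real.iInf_nonneg
  intro S
  apply cutDiligence_nonneg
  rcases S.2 with ⟨h1, -⟩
  rw [Finset.nonempty_iff_ne_empty]
  intro h
  rw [h] at h1
  simp [vol] at h1

lemma cutPairs_compl (G : SimpleGraph V) [DecidableRel G.Adj] (S : Finset V) :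
    cutPairs G Sᶜ = (cutPairs G S).image Prod.swap := by
  ext ⟨u, v⟩
  simp only [cutPairs, Finset.mem_filter, Finset.mem_univ, true_and, Finset.mem_image,
    Finset.mem_compl, Prod.exists, Prod.swap_prod_mk, Prod.mk.injEq, not_not]
  constructor
  · rintro ⟨h1, h2, h3⟩
    exact ⟨v, u, ⟨h2, h1, h3.symm⟩, rfl, rfl⟩
  · rintro ⟨a, b, ⟨ha, hb, hab⟩, rfl, rfl⟩
    exact ⟨hb, ha, hab.symm⟩

lemma key_ineq (G : SimpleGraph V) [DecidableRel G.Adj]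
    (hn : 2 ≤ Fintype.card V) (hconn : G.Connected)
    (S : Finset V) (hS : S.Nonempty) (hSc : Sᶜ.Nonempty)
    (hvol : vol G S ≤ vol G Sᶜ) :
    conductance G * diligence G * (S.card : ℝ)
      ≤ ∑ p ∈ cutPairs G S, (1 / (G.degree p.1 : ℝ) + 1 / (G.degree p.2 : ℝ)) := by
  have hvolS : 0 < vol G S :=
    Finset.sum_pos (fun u _ => mydeg_pos G hn hconn u) hS
  have hSne : S ≠ Finset.univ := by
    rintro rfl
    simp at hSc
  have hv0 : (0:ℝ) < (vol G S : ℝ) := by exact_mod_cast hvolS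
  have hk0 : (0:ℝ) < (S.card : ℝ) := by exact_mod_cast hS.card_pos
  have havg : 0 < avgDeg G S := div_pos hv0 hk0
  -- conductance bound
  have hΦ : conductance G ≤ ((cutPairs G S).card : ℝ) / (vol G S : ℝ) := by
    have h : conductance G ≤ ((cutPairs G S).card : ℝ) / min (vol G S : ℝ) (vol G Sᶜ : ℝ) :=
      ciInf_le (Set.Finite.bddBelow (Set.finite_range _))
        (⟨S, hS, hSne⟩ : {S : Finset V // S.Nonempty ∧ S ≠ Finset.univ})
    rwa [min_eq_left (by exact_mod_cast hvol)] at h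
  -- diligence bound
  have hρ : diligence G ≤ cutDiligence G S := by
    have h2 : 2 * vol G S ≤ vol G Finset.univ := by
      rw [vol_split G S]; omega
    exact ciInf_le (Set.Finite.bddBelow (Set.finite_range _))
      (⟨S, hvolS, h2⟩ : {S : Finset V // 0 < vol G S ∧ 2 * vol G S ≤ vol G Finset.univ})
  -- per pair bound
  have hper : ∀ p ∈ cutPairs G S,
      cutDiligence G S / avgDeg G S ≤ 1 / (G.degree p.1 : ℝ) + 1 / (G.degree p.2 : ℝ) := by
    intro p hp
    have h1 : cutDiligence G S ≤
        max (avgDeg G S / (G.degree p.1 : ℝ)) (avgDeg G S / (G.degree p.2 : ℝ)) :=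
      ciInf_le (Set.Finite.bddBelow (Set.finite_range _)) (⟨p, hp⟩ : cutPairs G S)
    have h2 : max (avgDeg G S / (G.degree p.1 : ℝ)) (avgDeg G S / (G.degree p.2 : ℝ))
        ≤ (1 / (G.degree p.1 : ℝ) + 1 / (G.degree p.2 : ℝ)) * avgDeg G S := by
      have e : (1 / (G.degree p.1 : ℝ) + 1 / (G.degree p.2 : ℝ)) * avgDeg G S
          = avgDeg G S / (G.degree p.1 : ℝ) + avgDeg G S / (G.degree p.2 : ℝ) := by ring
      rw [e]
      exact max_le (le_add_of_nonneg_right (div_nonneg havg.le (Nat.cast_nonneg _)))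
        (le_add_of_nonneg_left (div_nonneg havg.le (Nat.cast_nonneg _)))
    rw [div_le_iff₀ havg]
    exact h1.trans h2
  have hc0 : 0 ≤ cutDiligence G S := cutDiligence_nonneg G S hS
  calc conductance G * diligence G * (S.card : ℝ)
      ≤ conductance G * cutDiligence G S * (S.card : ℝ) :=
        mul_le_mul_of_nonneg_right
          (mul_le_mul_of_nonneg_left hρ (conductance_nonneg G)) hk0.le
    _ ≤ (((cutPairs G S).card : ℝ) / (vol G S : ℝ)) * cutDiligence G S * (S.card : ℝ) :=
        mul_le_mul_of_nonneg_right (mul_le_mul_of_nonneg_right hΦ hc0) hk0.le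
    _ = ((cutPairs G S).card : ℝ) * (cutDiligence G S / avgDeg G S) := by
        unfold avgDeg
        field_simp
    _ = ∑ _p ∈ cutPairs G S, cutDiligence G S / avgDeg G S := by
        rw [Finset.sum_const, nsmul_eq_mul]
    _ ≤ ∑ p ∈ cutPairs G S, (1 / (G.degree p.1 : ℝ) + 1 / (G.degree p.2 : ℝ)) :=
        Finset.sum_le_sum hper

/-- For a finite simple connected graph `G` on `n ≥ 2` vertices and a
nonempty proper subset `I` of vertices with complement `U`,
`∑_{{u,v} ∈ E(I,U)} (1/d_u + 1/d_v) ≥ Φ(G) · ρ(G) · min(|I|, |U|)`. -/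
theorem stmt1 {V : Type*} [Fintype V] [DecidableEq V]
    (G : SimpleGraph V) [DecidableRel G.Adj]
    (hn : 2 ≤ Fintype.card V) (hconn : G.Connected)
    (I : Finset V) (hI : I.Nonempty) (hIproper : I ≠ Finset.univ) :
    conductance G * diligence G * min (I.card : ℝ) ((Iᶜ : Finset V).card : ℝ)
      ≤ ∑ p ∈ cutPairs G I, (1 / (G.degree p.1 : ℝ) + 1 / (G.degree p.2 : ℝ)) := by
  have hIc : (Iᶜ : Finset V).Nonempty := by
    rw [Finset.nonempty_iff_ne_empty]
    intro h
    exact hIproper (by rw [← compl_compl I, h, Finset.compl_empty])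
  have h0 : 0 ≤ conductance G * diligence G :=
    mul_nonneg (conductance_nonneg G) (diligence_nonneg G)
  rcases le_total (vol G I) (vol G Iᶜ) with hv | hv
  · calc conductance G * diligence G * min (I.card : ℝ) ((Iᶜ : Finset V).card : ℝ)
        ≤ conductance G * diligence G * (I.card : ℝ) :=
          mul_le_mul_of_nonneg_left (min_le_left _ _) h0
      _ ≤ _ := key_ineq G hn hconn I hI hIc hv
  · have hcc : (Iᶜ : Finset V)ᶜ = I := compl_compl I
    have hsum : ∑ p ∈ cutPairs G Iᶜ, (1 / (G.degree p.1 : ℝ) + 1 / (G.degree p.2 : ℝ))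
        = ∑ p ∈ cutPairs G I, (1 / (G.degree p.1 : ℝ) + 1 / (G.degree p.2 : ℝ)) := by
      rw [cutPairs_compl, Finset.sum_image (fun a _ b _ h => Prod.swap_injective h)]
      exact Finset.sum_congr rfl (fun p _ => by simp [add_comm])
    calc conductance G * diligence G * min (I.card : ℝ) ((Iᶜ : Finset V).card : ℝ)
        ≤ conductance G * diligence G * ((Iᶜ : Finset V).card : ℝ) :=
          mul_le_mul_of_nonneg_left (min_le_right _ _) h0
      _ ≤ ∑ p ∈ cutPairs G Iᶜ, (1 / (G.degree p.1 : ℝ) + 1 / (G.degree p.2 : ℝ)) :=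
          key_ineq G hn hconn Iᶜ hIc (by rw [hcc]; exact hI) (by rw [hcc]; exact hv)
      _ = _ := hsum
end
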